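/- arXiv:2405.06933 — 5 statements merged into one kernel-verified Lean document; each statement's English description precedes it below -/
import Mathlib

section
/- Let 1 ≤ m ≤ |S|. Let ω_m be an m-element subset of S consisting of m largest-weight elements (i.e. min_{s∈ω_m} w(s) ≥ max_{s∈S∖ω_m} w(s)) and let ω_{m−1} be an (m−1)-element subset of S consisting of m−1 largest-weight elements. If w(ω_{m−1}) < T ≤ w(ω_m), then ω_m is a critical syndrome, and moreover min_{ω∈∂} |ω| = m (every critical syndrome has cardinality at least m). -/
/-!
A set of `m - 1` largest weights maximises the weight among all sets of at most `m - 1`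
elements (exchange the elements outside it for heavier ones inside it). So no set of fewer than
`m` elements is a syndrome: the proper subsets of `ωm` are not, and no critical syndrome is that
small.
-/

open scoped Classical

noncomputable section

/-- `ω` is a syndrome for weights `w` and threshold `T`: its weight sum is at least `T`. -/
def IsSyndrome {S : Type*} (w : S → ℝ) (T : ℝ) (ω : Finset S) : Prop :=
  T ≤ ∑ s ∈ ω, w s

/-- `ω` is a critical syndrome: it is a syndrome, but every proper subset of it is not. -/
def IsCritical {S : Type*} (w : S → ℝ) (T : ℝ) (ω : Finset S) : Prop :=
  (T ≤ ∑ s ∈ ω, w s) ∧ ∀ ω' ⊂ ω, ∑ s ∈ ω', w s < T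

namespace Finset

variable {ι M : Type*} [AddCommMonoid M] [LinearOrder M]

theorem sum_le_sum_of_card_le_of_forall_le [IsOrderedAddMonoid M] {X Y : Finset ι} {w : ι → M}
    (hcard : #X ≤ #Y) (hle : ∀ x ∈ X, ∀ y ∈ Y, w x ≤ w y) (hY : ∀ y ∈ Y, 0 ≤ w y) :
    ∑ x ∈ X, w x ≤ ∑ y ∈ Y, w y := by
  rcases Y.eq_empty_or_nonempty with rfl | hYne
  · simp [card_eq_zero.mp (Nat.le_zero.mp hcard)]
  calc ∑ x ∈ X, w x ≤ #X • Y.inf' hYne w :=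
        sum_le_card_nsmul _ _ _ fun x hx => le_inf' _ _ fun y hy => hle x hx y hy
    _ ≤ #Y • Y.inf' hYne w := nsmul_le_nsmul_left (le_inf' _ _ hY) hcard
    _ ≤ ∑ y ∈ Y, w y := card_nsmul_le_sum _ _ _ fun y hy => inf'_le _ hy

theorem sum_le_sum_of_card_le_of_notMem_le_mem [IsOrderedCancelAddMonoid M] {A B : Finset ι}
    {w : ι → M} (hw : ∀ s, 0 ≤ w s) (hB : ∀ s ∈ B, ∀ s' ∉ B, w s' ≤ w s)
    (hcard : #A ≤ #B) :
    ∑ s ∈ A, w s ≤ ∑ s ∈ B, w s := by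
  rw [← sum_sdiff_le_sum_sdiff]
  refine sum_le_sum_of_card_le_of_forall_le (card_sdiff_le_card_sdiff_iff.mpr hcard) ?_
    fun s _ => hw s
  intro s' hs' s hs
  exact hB s (mem_sdiff.mp hs).1 s' (mem_sdiff.mp hs').2

end Finset

theorem top_weight_critical_syndrome_general
    {S : Type*} (w : S → ℝ) (hw : ∀ s, 0 < w s)
    (T : ℝ)
    (m : ℕ)
    (ωm : Finset S) (hωm_card : ωm.card = m)
    (ωm1 : Finset S) (hωm1_card : ωm1.card = m - 1)
    (hωm1_top : ∀ s ∈ ωm1, ∀ s' ∉ ωm1, w s' ≤ w s)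
    (hlt : ∑ s ∈ ωm1, w s < T) (hge : T ≤ ∑ s ∈ ωm, w s) :
    IsCritical w T ωm ∧ ∀ ω : Finset S, IsCritical w T ω → m ≤ ω.card := by
  have small_sum_lt : ∀ ω : Finset S, ω.card < m → ∑ s ∈ ω, w s < T := fun ω hω =>
    (Finset.sum_le_sum_of_card_le_of_notMem_le_mem (fun s => (hw s).le) hωm1_top
      (by omega)).trans_lt hlt
  refine ⟨⟨hge, fun ω' hω' => small_sum_lt ω' (hωm_card ▸ Finset.card_lt_card hω')⟩,
    fun ω hω => ?_⟩
  by_contra! hcard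
  exact (small_sum_lt ω hcard).not_ge hω.1

/-- first half of Fact 1. If a set `ωm` of `m` largest-weight elements is a
syndrome while a set `ωm1` of `m − 1` largest-weight elements is not, then `ωm` is a critical
syndrome and every critical syndrome has cardinality at least `m`. -/
theorem top_weight_critical_syndrome
    {S : Type*} [Fintype S] [Nonempty S] (w : S → ℝ) (hw : ∀ s, 0 < w s)
    (T : ℝ) (hT : 0 < T) (hST : T ≤ ∑ s, w s)
    (m : ℕ) (hm1 : 1 ≤ m) (hm : m ≤ Fintype.card S)
    (ωm : Finset S) (hωm_card : ωm.card = m)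
    (hωm_top : ∀ s ∈ ωm, ∀ s' ∉ ωm, w s' ≤ w s)
    (ωm1 : Finset S) (hωm1_card : ωm1.card = m - 1)
    (hωm1_top : ∀ s ∈ ωm1, ∀ s' ∉ ωm1, w s' ≤ w s)
    (hlt : ∑ s ∈ ωm1, w s < T) (hge : T ≤ ∑ s ∈ ωm, w s) :
    IsCritical w T ωm ∧ ∀ ω : Finset S, IsCritical w T ω → m ≤ ω.card :=
  top_weight_critical_syndrome_general w hw T m ωm hωm_card ωm1 hωm1_card hωm1_top hlt hge
end
end

section
/- Let 1 ≤ m ≤ |S|. Let ω_m^L be an m-element subset of S consisting of m least-weight elements (i.e. max_{s∈ω_m^L} w(s) ≤ min_{s∈S∖ω_m^L} w(s)) and let ω_{m−1}^L be an (m−1)-element subset of S consisting of m−1 least-weight elements. If w(ω_{m−1}^L) < T ≤ w(ω_m^L), then every critical syndrome has cardinality at most m, i.e. max_{ω∈∂} |ω| ≤ m. -/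
open scoped Classical

noncomputable section

/-- Any set with the same cardinality as a set of least-weight elements has at least its
weight sum. -/
lemma sum_least_le {S : Type*} [Fintype S] (w : S → ℝ)
    (ωmL : Finset S) (hωmL_low : ∀ s ∈ ωmL, ∀ s' ∉ ωmL, w s ≤ w s')
    (A : Finset S) (hA : A.card = ωmL.card) :
    ∑ s ∈ ωmL, w s ≤ ∑ s ∈ A, w s := by
  have hcard : (ωmL \ A).card = (A \ ωmL).card := by
    rw [Finset.card_sdiff_comm hA.symm]
  have e : (↥(ωmL \ A)) ≃ (↥(A \ ωmL)) :=
    Finset.equivOfCardEq (by simpa using hcard)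
  have key : ∑ s ∈ ωmL \ A, w s ≤ ∑ s ∈ A \ ωmL, w s := by
    rw [← Finset.sum_coe_sort (ωmL \ A) w, ← Finset.sum_coe_sort (A \ ωmL) w,
      ← Equiv.sum_comp e (fun j : ↥(A \ ωmL) => w j)]
    apply Finset.sum_le_sum
    intro i _
    have hi : (i : S) ∈ ωmL := (Finset.mem_sdiff.mp i.2).1
    have hej : ((e i : S)) ∉ ωmL := (Finset.mem_sdiff.mp (e i).2).2
    exact hωmL_low _ hi _ hej
  calc ∑ s ∈ ωmL, w s = ∑ s ∈ ωmL ∩ A, w s + ∑ s ∈ ωmL \ A, w s :=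
        (Finset.sum_inter_add_sum_sdiff _ _ _).symm
    _ ≤ ∑ s ∈ ωmL ∩ A, w s + ∑ s ∈ A \ ωmL, w s := by linarith
    _ = ∑ s ∈ A ∩ ωmL, w s + ∑ s ∈ A \ ωmL, w s := by rw [Finset.inter_comm]
    _ = ∑ s ∈ A, w s := Finset.sum_inter_add_sum_sdiff _ _ _

/-- second half of Fact 1. If a set `ωmL` of `m` least-weight elements is a
syndrome while a set `ωm1L` of `m − 1` least-weight elements is not, then every critical
syndrome has cardinality at most `m`. -/
theorem low_weight_critical_syndrome_card_bound
    {S : Type*} [Fintype S] [Nonempty S] (w : S → ℝ) (hw : ∀ s, 0 < w s)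
    (T : ℝ) (hT : 0 < T) (hST : T ≤ ∑ s, w s)
    (m : ℕ) (hm1 : 1 ≤ m) (hm : m ≤ Fintype.card S)
    (ωmL : Finset S) (hωmL_card : ωmL.card = m)
    (hωmL_low : ∀ s ∈ ωmL, ∀ s' ∉ ωmL, w s ≤ w s')
    (ωm1L : Finset S) (hωm1L_card : ωm1L.card = m - 1)
    (hωm1L_low : ∀ s ∈ ωm1L, ∀ s' ∉ ωm1L, w s ≤ w s')
    (hlt : ∑ s ∈ ωm1L, w s < T) (hge : T ≤ ∑ s ∈ ωmL, w s) :
    ∀ ω : Finset S, IsCritical w T ω → ω.card ≤ m := by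
  intro ω hcrit
  by_contra hbig
  push_neg at hbig
  obtain ⟨ω', hω'sub, hω'card⟩ := Finset.exists_subset_card_eq (le_of_lt hbig : m ≤ ω.card)
  have hproper : ω' ⊂ ω := hω'sub.ssubset_of_ne (by
    intro h; rw [h] at hω'card; omega)
  have h1 : ∑ s ∈ ωmL, w s ≤ ∑ s ∈ ω', w s :=
    sum_least_le w ωmL hωmL_low ω' (by rw [hω'card, hωmL_card])
  have h2 := hcrit.2 ω' hproper
  linarith
end
end

section
/- Let L ≥ 1 and N_1, …, N_L be natural numbers with n = N_1 + … + N_L ≥ 1. Let A be a family of L-tuples a = (a_1, …, a_L) of natural numbers with 0 ≤ a_l ≤ N_l for all l, such that A is an antichain for the componentwise order: no two distinct members a, b of A satisfy a_l ≤ b_l for every l. Then |A| ≤ C(⌈n/2⌉ + L − 1, L − 1). -/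
/-!
Sperner-type argument through a symmetric chain decomposition (de Bruijn, Tengbergen,
Kruyswijk). With `n = rank N`, the box `{a | a ≤ N}` splits into chains having one tuple of each
rank `r ∈ [i, n - i]`. Each chain meets the rank `⌈n / 2⌉` and contains at most one element of an
antichain, so sending an antichain element to the rank-`⌈n / 2⌉` tuple of its chain is injective;
the image consists of weak compositions of `⌈n / 2⌉` into `L` parts, counted by stars and bars.

The chains are built one coordinate at a time: a chain with `k + 1` elements times `[0, q]` is a
grid `[0, k] × [0, q]`, which splits into hooks that are again symmetric chains.
-/

open Finset

namespace SymmChain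

variable {L : ℕ}

def rank (a : Fin L → ℕ) : ℕ := ∑ l, a l

@[simp]
lemma rank_cons (y : ℕ) (a : Fin L → ℕ) : rank (Fin.cons y a : Fin (L + 1) → ℕ) = y + rank a :=
  Fin.sum_cons y a

/-- The grid `[0, k] × [0, q]` is covered by the hooks `t = 0, …, min k q`: hook `t` runs up
the column `x = t` from `(t, 0)` to `(t, q - t)`, then along the row `y = q - t` to `(k, q - t)`.
`hookIndex q x y` is the hook through `(x, y)` and `gridHook q t ρ` the point of rank `ρ` on
hook `t`. -/
def hookIndex (q x y : ℕ) : ℕ := if x + y ≤ q then x else q - y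

def gridHook (q t ρ : ℕ) : ℕ × ℕ := if ρ ≤ q then (t, ρ - t) else (ρ - q + t, q - t)

variable {q t x y k ρ r : ℕ}

lemma hookIndex_le_left : hookIndex q x y ≤ x := by
  unfold hookIndex; split_ifs <;> omega

lemma hookIndex_le : hookIndex q x y ≤ q := by
  unfold hookIndex; split_ifs <;> omega

lemma add_add_hookIndex_le (hx : x ≤ k) (hy : y ≤ q) : x + y + hookIndex q x y ≤ k + q := by
  unfold hookIndex; split_ifs <;> omega

lemma gridHook_monotone (htq : t ≤ q) : Monotone (gridHook q t) := by
  intro ρ ρ' h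
  unfold gridHook
  split_ifs <;> exact Prod.mk_le_mk.2 ⟨by omega, by omega⟩

lemma gridHook_fst_add_snd (htq : t ≤ q) (ht : t ≤ ρ) :
    (gridHook q t ρ).1 + (gridHook q t ρ).2 = ρ := by
  unfold gridHook; split_ifs <;> simp only <;> omega

lemma gridHook_fst_le (htk : t ≤ k) (h : ρ + t ≤ k + q) : (gridHook q t ρ).1 ≤ k := by
  unfold gridHook; split_ifs <;> simp only <;> omega

lemma gridHook_hookIndex (hy : y ≤ q) : gridHook q (hookIndex q x y) (x + y) = (x, y) := by
  unfold gridHook hookIndex; split_ifs <;> ext <;> simp only <;> omega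

lemma hookIndex_gridHook (htq : t ≤ q) (ht : t ≤ ρ) :
    hookIndex q (gridHook q t ρ).1 (gridHook q t ρ).2 = t := by
  unfold gridHook hookIndex; split_ifs <;> simp only at * <;> omega

/-- The hook `t` of the grid spanned by the chain `c i ≤ … ≤ c (n - i)` and a new coordinate
in `[0, q]`, as a chain indexed by rank. -/
def hookChain (q i t : ℕ) (c : ℕ → Fin L → ℕ) (r : ℕ) : Fin (L + 1) → ℕ :=
  Fin.cons (gridHook q t (r - i)).2 (c (i + (gridHook q t (r - i)).1))

variable {i : ℕ} {c : ℕ → Fin L → ℕ}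

lemma hookChain_monotone (hc : Monotone c) (htq : t ≤ q) : Monotone (hookChain q i t c) := by
  intro r r' h
  have hp := gridHook_monotone htq (Nat.sub_le_sub_right h i)
  exact Fin.cons_le_cons.2 ⟨hp.2, hc (Nat.add_le_add_left hp.1 i)⟩

/-- `C a` is the chain through `a`: it passes through one tuple of each rank
`r ∈ [I a, rank N - I a]`, a window symmetric about `rank N / 2`. -/
structure IsSymmChainDecomp (N : Fin L → ℕ) (I : (Fin L → ℕ) → ℕ)
    (C : (Fin L → ℕ) → ℕ → Fin L → ℕ) : Prop where
  start_le_rank : ∀ a ≤ N, I a ≤ rank a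
  rank_add_start_le : ∀ a ≤ N, rank a + I a ≤ rank N
  monotone_chain : ∀ a ≤ N, Monotone (C a)
  chain_rank : ∀ a ≤ N, C a (rank a) = a
  rank_chain : ∀ a ≤ N, ∀ r, I a ≤ r → r + I a ≤ rank N → rank (C a r) = r
  start_chain : ∀ a ≤ N, ∀ r, I a ≤ r → r + I a ≤ rank N → I (C a r) = I a
  chain_chain : ∀ a ≤ N, ∀ r, I a ≤ r → r + I a ≤ rank N → C (C a r) = C a

lemma isSymmChainDecomp_fin_zero (N : Fin 0 → ℕ) :
    IsSymmChainDecomp N (fun _ => 0) (fun a _ => a) where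
  start_le_rank _ _ := Nat.zero_le _
  rank_add_start_le a _ := by simp [rank]
  monotone_chain _ _ := monotone_const
  chain_rank _ _ := rfl
  rank_chain a _ r _ hr := by simp_all [rank]
  start_chain _ _ _ _ _ := rfl
  chain_chain _ _ _ _ _ := rfl

/-- A tuple `b = cons y a` is put on hook `hookIndex q x y` of the grid spanned by the chain
`C a` (in which `a` sits at column `x = rank a - I a`) and `[0, q]`. -/
def consStart (I : (Fin L → ℕ) → ℕ) (q : ℕ) (b : Fin (L + 1) → ℕ) : ℕ :=
  I (Fin.tail b) + hookIndex q (rank (Fin.tail b) - I (Fin.tail b)) (b 0)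

def consChain (I : (Fin L → ℕ) → ℕ) (C : (Fin L → ℕ) → ℕ → Fin L → ℕ) (q : ℕ)
    (b : Fin (L + 1) → ℕ) : ℕ → Fin (L + 1) → ℕ :=
  hookChain q (I (Fin.tail b)) (hookIndex q (rank (Fin.tail b) - I (Fin.tail b)) (b 0))
    (C (Fin.tail b))

lemma forall_le_cons {N : Fin L → ℕ} {P : (Fin (L + 1) → ℕ) → Prop}
    (h : ∀ y ≤ q, ∀ a ≤ N, P (Fin.cons y a)) : ∀ b ≤ (Fin.cons q N : Fin (L + 1) → ℕ), P b := by
  intro b hb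
  rw [← Fin.cons_self_tail b] at hb ⊢
  exact h _ (Fin.cons_le_cons.1 hb).1 _ (Fin.cons_le_cons.1 hb).2

variable {N : Fin L → ℕ} {I : (Fin L → ℕ) → ℕ} {C : (Fin L → ℕ) → ℕ → Fin L → ℕ}

lemma rank_hookChain {n : ℕ} (hc : ∀ s, i ≤ s → s + i ≤ n → rank (c s) = s) (htq : t ≤ q)
    (htk : i + t + i ≤ n) (hr : i + t ≤ r) (hr' : r + (i + t) ≤ q + n) :
    rank (hookChain q i t c r) = r := by
  have hsum := gridHook_fst_add_snd (ρ := r - i) htq (by omega)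
  have hcol := gridHook_fst_le (k := n - 2 * i) (t := t) (q := q) (ρ := r - i) (by omega) (by omega)
  rw [hookChain, rank_cons, hc _ (Nat.le_add_right i _) (by omega)]
  omega

lemma IsSymmChainDecomp.start_add_hookIndex_le (h : IsSymmChainDecomp N I C) {a : Fin L → ℕ}
    (ha : a ≤ N) : I a + hookIndex q (rank a - I a) y + I a ≤ rank N := by
  have := h.start_le_rank a ha
  have := h.rank_add_start_le a ha
  have := hookIndex_le_left (q := q) (x := rank a - I a) (y := y)
  omega

lemma IsSymmChainDecomp.cons_hookChain (h : IsSymmChainDecomp N I C) {a : Fin L → ℕ}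
    (ha : a ≤ N) (htq : t ≤ q) (htk : I a + t + I a ≤ rank N) (hr : I a + t ≤ r)
    (hr' : r + (I a + t) ≤ q + rank N) :
    consStart I q (hookChain q (I a) t (C a) r) = I a + t ∧
      consChain I C q (hookChain q (I a) t (C a) r) = hookChain q (I a) t (C a) := by
  have hsum := gridHook_fst_add_snd (ρ := r - I a) htq (by omega)
  have hcol := gridHook_fst_le (k := rank N - 2 * I a) (t := t) (q := q) (ρ := r - I a)
    (by omega) (by omega)
  have hs : I a ≤ I a + (gridHook q t (r - I a)).1 := Nat.le_add_right _ _
  have hs' : I a + (gridHook q t (r - I a)).1 + I a ≤ rank N := by omega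
  simp only [consStart, consChain, hookChain, Fin.tail_cons, Fin.cons_zero,
    h.start_chain a ha _ hs hs', h.chain_chain a ha _ hs hs', h.rank_chain a ha _ hs hs',
    Nat.add_sub_cancel_left, hookIndex_gridHook htq (by omega : t ≤ r - I a), and_self]

theorem IsSymmChainDecomp.cons (h : IsSymmChainDecomp N I C) (q : ℕ) :
    IsSymmChainDecomp (Fin.cons q N) (consStart I q) (consChain I C q) where
  start_le_rank := forall_le_cons fun y _ a ha => by
    have := h.start_le_rank a ha
    have := hookIndex_le_left (q := q) (x := rank a - I a) (y := y)
    simp only [consStart, Fin.tail_cons, Fin.cons_zero, rank_cons]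
    omega
  rank_add_start_le := forall_le_cons fun y hy a ha => by
    have := h.start_le_rank a ha
    have := h.rank_add_start_le a ha
    have := add_add_hookIndex_le (k := rank N - 2 * I a) (x := rank a - I a) (by omega) hy
    simp only [consStart, Fin.tail_cons, Fin.cons_zero, rank_cons]
    omega
  monotone_chain := forall_le_cons fun y _ a ha =>
    hookChain_monotone (h.monotone_chain a ha) hookIndex_le
  chain_rank := forall_le_cons fun y hy a ha => by
    have := h.start_le_rank a ha
    have hxy : y + rank a - I a = rank a - I a + y := by omega
    simp only [consChain, hookChain, Fin.tail_cons, Fin.cons_zero, rank_cons, hxy,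
      gridHook_hookIndex hy, Nat.add_sub_cancel' this, h.chain_rank a ha]
  rank_chain := forall_le_cons fun y _ a ha r hr hr' => by
    simp only [consStart, consChain, Fin.tail_cons, Fin.cons_zero, rank_cons] at hr hr' ⊢
    exact rank_hookChain (h.rank_chain a ha) hookIndex_le (h.start_add_hookIndex_le ha) hr hr'
  start_chain := forall_le_cons fun y _ a ha r hr hr' => by
    simp only [consStart, consChain, Fin.tail_cons, Fin.cons_zero, rank_cons] at hr hr' ⊢
    exact (h.cons_hookChain ha hookIndex_le (h.start_add_hookIndex_le ha) hr hr').1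
  chain_chain := forall_le_cons fun y _ a ha r hr hr' => by
    simp only [consStart, consChain, Fin.tail_cons, Fin.cons_zero, rank_cons] at hr hr' ⊢
    exact (h.cons_hookChain ha hookIndex_le (h.start_add_hookIndex_le ha) hr hr').2

theorem exists_isSymmChainDecomp : ∀ {L : ℕ} (N : Fin L → ℕ), ∃ I C, IsSymmChainDecomp N I C
  | 0, N => ⟨_, _, isSymmChainDecomp_fin_zero N⟩
  | _ + 1, N => by
    obtain ⟨I, C, h⟩ := exists_isSymmChainDecomp (Fin.tail N)
    rw [← Fin.cons_self_tail N]
    exact ⟨_, _, h.cons (N 0)⟩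

lemma IsSymmChainDecomp.injOn_middle (h : IsSymmChainDecomp N I C) {A : Set (Fin L → ℕ)}
    (hAN : ∀ a ∈ A, a ≤ N) (hA : IsAntichain (· ≤ ·) A) :
    Set.InjOn (fun a => C a ((rank N + 1) / 2)) A := by
  have hmid : ∀ a ≤ N, I a ≤ (rank N + 1) / 2 ∧ (rank N + 1) / 2 + I a ≤ rank N := fun a ha => by
    have := h.start_le_rank a ha
    have := h.rank_add_start_le a ha
    omega
  intro a ha b hb hab
  have hC : C a = C b := by
    rw [← h.chain_chain a (hAN a ha) _ (hmid a (hAN a ha)).1 (hmid a (hAN a ha)).2,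
      ← h.chain_chain b (hAN b hb) _ (hmid b (hAN b hb)).1 (hmid b (hAN b hb)).2]
    exact congrArg C hab
  have ha' : C b (rank a) = a := hC ▸ h.chain_rank a (hAN a ha)
  have hb' : C b (rank b) = b := h.chain_rank b (hAN b hb)
  rcases le_total (rank a) (rank b) with hle | hle
  · refine hA.eq ha hb ?_
    calc a = C b (rank a) := ha'.symm
      _ ≤ C b (rank b) := h.monotone_chain b (hAN b hb) hle
      _ = b := hb'
  · refine (hA.eq hb ha ?_).symm
    calc b = C b (rank b) := hb'.symm
      _ ≤ C b (rank a) := h.monotone_chain b (hAN b hb) hle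
      _ = a := ha'

theorem IsSymmChainDecomp.card_antichain_le (h : IsSymmChainDecomp N I C)
    {A : Finset (Fin L → ℕ)} (hAN : ∀ a ∈ A, a ≤ N)
    (hA : IsAntichain (· ≤ ·) (A : Set (Fin L → ℕ))) :
    #A ≤ #(Nat.antidiagonalTuple L ((rank N + 1) / 2)) := by
  refine card_le_card_of_injOn _ (fun a ha => ?_) (h.injOn_middle hAN hA)
  have := h.start_le_rank a (hAN a ha)
  have := h.rank_add_start_le a (hAN a ha)
  exact Nat.mem_antidiagonalTuple.2 (h.rank_chain a (hAN a ha) _ (by omega) (by omega))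

theorem card_antidiagonalTuple_le (L m : ℕ) :
    #(Nat.antidiagonalTuple L m) ≤ (m + L - 1).choose (L - 1) := by
  rcases L with _ | L
  · rcases m with _ | m <;> simp
  rw [card_eq_of_equiv_fintype ((Equiv.subtypeEquivRight fun _ => Nat.mem_antidiagonalTuple).trans
      (Sym.equivNatSumOfFintype (Fin (L + 1)) m).symm), Sym.card_sym_eq_choose, Fintype.card_fin,
    show L + 1 + m - 1 = m + L by omega, show m + (L + 1) - 1 = m + L by omega,
    Nat.choose_symm_add, Nat.add_sub_cancel]

end SymmChain

theorem antichain_card_le_weak_compositions_general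
    (L : ℕ) (Ngroup : Fin L → ℕ) (n : ℕ) (hn : n = ∑ l, Ngroup l)
    (A : Finset (Fin L → ℕ))
    (hbdd : ∀ a ∈ A, ∀ l, a l ≤ Ngroup l)
    (hantichain : ∀ a ∈ A, ∀ b ∈ A, a ≠ b → ¬ ∀ l, a l ≤ b l) :
    A.card ≤ Nat.choose ((n + 1) / 2 + L - 1) (L - 1) := by
  obtain ⟨I, C, h⟩ := SymmChain.exists_isSymmChainDecomp Ngroup
  subst hn
  exact (h.card_antichain_le hbdd fun a ha b hb hab => hantichain a ha b hb hab).trans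
    (SymmChain.card_antidiagonalTuple_le L _)

/-- Fact 2, combinatorial content. An antichain, for the componentwise
order, of `L`-tuples `a` with `a l ≤ N_l` has size at most `C(⌈n/2⌉ + L − 1, L − 1)`,
where `n = N_1 + ⋯ + N_L`. -/
theorem antichain_card_le_weak_compositions
    (L : ℕ) (hL : 1 ≤ L) (Ngroup : Fin L → ℕ) (n : ℕ) (hn : n = ∑ l, Ngroup l)
    (hn1 : 1 ≤ n) (A : Finset (Fin L → ℕ))
    (hbdd : ∀ a ∈ A, ∀ l, a l ≤ Ngroup l)
    (hantichain : ∀ a ∈ A, ∀ b ∈ A, a ≠ b → ¬ ∀ l, a l ≤ b l) :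
    A.card ≤ Nat.choose ((n + 1) / 2 + L - 1) (L - 1) :=
  antichain_card_le_weak_compositions_general L Ngroup n hn A hbdd hantichain
end

section
/- Suppose every critical syndrome in ∂ has the same cardinality K (i.e. min_{ω∈∂}|ω| = max_{ω∈∂}|ω| = K), and suppose every K-element subset of S is a syndrome. Then for every ω ⊆ S, w(ω) ≥ T if and only if |ω| ≥ K; that is, the family of syndromes coincides with the family of all subsets of S of cardinality at least K. -/
open scoped Classical

noncomputable section

/-- If every critical syndrome has the same cardinality `K` and every
`K`-element subset is a syndrome, then the syndromes are exactly the subsets of cardinality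
at least `K`: the weighted rule coincides with the anonymous `K` voting rule. -/
theorem syndromes_are_card_ge_K
    {S : Type*} [Fintype S] [Nonempty S] (w : S → ℝ) (hw : ∀ s, 0 < w s)
    (T : ℝ) (hT : 0 < T) (hST : T ≤ ∑ s, w s) (K : ℕ)
    (hcritK : ∀ ω : Finset S, IsCritical w T ω → ω.card = K)
    (hallK : ∀ ω : Finset S, ω.card = K → IsSyndrome w T ω) :
    ∀ ω : Finset S, IsSyndrome w T ω ↔ K ≤ ω.card := by
  -- every syndrome contains a critical syndrome
  have hsub : ∀ ω : Finset S, IsSyndrome w T ω →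
      ∃ ω' ⊆ ω, IsCritical w T ω' := by
    intro ω
    induction ω using Finset.strongInduction with
    | _ ω ih =>
      intro hω
      by_cases hc : IsCritical w T ω
      · exact ⟨ω, subset_rfl, hc⟩
      · simp only [IsCritical, not_and, not_forall, not_lt] at hc
        obtain ⟨ω', hss, hω'⟩ := hc hω
        obtain ⟨ω'', h1, h2⟩ := ih ω' hss hω'
        exact ⟨ω'', h1.trans hss.subset, h2⟩
  intro ω
  constructor
  · intro hω
    obtain ⟨ω', h1, h2⟩ := hsub ω hω
    calc K = ω'.card := (hcritK ω' h2).symm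
      _ ≤ ω.card := Finset.card_le_card h1
  · intro hK
    obtain ⟨ω', h1, h2⟩ := Finset.exists_subset_card_eq hK
    have := hallK ω' h2
    refine le_trans this (Finset.sum_le_sum_of_subset_of_nonneg h1 ?_)
    exact fun i _ _ => (hw i).le
end
end

section
/- Let ω* ⊆ S be a syndrome with |ω*| = K (for instance a critical syndrome of maximal cardinality), and define D = ω* ∪ {s ∈ S : w(s) ≥ max_{s'∈ω*} w(s')}. Then every K-element subset of D is a syndrome, i.e. every subset of D of cardinality K has weight sum at least T. -/
open scoped Classical

noncomputable section

/-!
Replacing ω* by a `K`-subset ω of `D` swaps the elements of `ω* \ ω` for equally many elements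
of `ω \ ω*`, each of which lies outside ω* and hence weighs at least as much as every element of
ω*. So the weight does not drop, and ω is a syndrome because ω* is.
-/

namespace Finset

variable {ι M : Type*} [AddCommMonoid M] [LinearOrder M] [IsOrderedAddMonoid M]
  {s t : Finset ι} {f : ι → M}

/-- Both sums are compared with `#s • min_t f`. -/
theorem sum_le_sum_of_card_eq_of_forall_le (hcard : #s = #t)
    (hle : ∀ x ∈ s, ∀ y ∈ t, f x ≤ f y) : ∑ x ∈ s, f x ≤ ∑ y ∈ t, f y := by
  rcases t.eq_empty_or_nonempty with rfl | ht
  · rw [card_empty, card_eq_zero] at hcard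
    simp [hcard]
  calc ∑ x ∈ s, f x ≤ #s • t.inf' ht f :=
        sum_le_card_nsmul _ _ _ fun x hx => le_inf' ht f fun y hy => hle x hx y hy
    _ = #t • t.inf' ht f := by rw [hcard]
    _ ≤ ∑ y ∈ t, f y := card_nsmul_le_sum _ _ _ fun y hy => inf'_le f hy

theorem sum_le_sum_of_card_eq_of_forall_sdiff_le [DecidableEq ι] (hcard : #s = #t)
    (hle : ∀ x ∈ s \ t, ∀ y ∈ t \ s, f x ≤ f y) : ∑ x ∈ s, f x ≤ ∑ y ∈ t, f y := by
  rw [← sum_inter_add_sum_sdiff s t, ← sum_inter_add_sum_sdiff t s, inter_comm]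
  exact add_le_add_right (sum_le_sum_of_card_eq_of_forall_le (card_sdiff_comm hcard) hle) _

end Finset

theorem every_K_subset_of_D_is_syndrome_general
    {S : Type*} [Fintype S] (w : S → ℝ)
    (T : ℝ) (K : ℕ)
    (ωstar : Finset S) (hstar_syn : IsSyndrome w T ωstar) (hstar_card : ωstar.card = K)
    (D : Finset S)
    (hD : D = ωstar ∪ Finset.univ.filter fun s => ∀ s' ∈ ωstar, w s' ≤ w s) :
    ∀ ω ⊆ D, ω.card = K → IsSyndrome w T ω := by
  intro ω hωD hω_card
  have hdominates : ∀ x ∈ ωstar \ ω, ∀ y ∈ ω \ ωstar, w x ≤ w y := by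
    intro x hx y hy
    obtain ⟨hyω, hy_not_star⟩ := Finset.mem_sdiff.1 hy
    have hyD := hωD hyω
    rw [hD, Finset.mem_union, Finset.mem_filter] at hyD
    exact (hyD.resolve_left hy_not_star).2 x (Finset.mem_sdiff.1 hx).1
  exact hstar_syn.trans
    (Finset.sum_le_sum_of_card_eq_of_forall_sdiff_le (hstar_card.trans hω_card.symm) hdominates)

/-- Let `ω*` be a syndrome of cardinality `K`, and let
`D = ω* ∪ {s : w(s) ≥ max_{s' ∈ ω*} w(s')}`. Then every `K`-element subset of `D` is a
syndrome. -/
theorem every_K_subset_of_D_is_syndrome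
    {S : Type*} [Fintype S] [Nonempty S] (w : S → ℝ) (hw : ∀ s, 0 < w s)
    (T : ℝ) (hT : 0 < T) (hST : T ≤ ∑ s, w s) (K : ℕ)
    (ωstar : Finset S) (hstar_syn : IsSyndrome w T ωstar) (hstar_card : ωstar.card = K)
    (D : Finset S)
    (hD : D = ωstar ∪ Finset.univ.filter fun s => ∀ s' ∈ ωstar, w s' ≤ w s) :
    ∀ ω ⊆ D, ω.card = K → IsSyndrome w T ω :=
  every_K_subset_of_D_is_syndrome_general w T K ωstar hstar_syn hstar_card D hD
end
end
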